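/- arXiv:1602.05598 — 2 statements merged into one kernel-verified Lean document; each statement's English description precedes it below -/
import Mathlib

section
/- There exists a Lipschitz orthonormal (d−1)-frame on the closed upper hemisphere of the unit sphere in ℝ^d: there is a constant C > 0 and a map f assigning to each x ∈ 𝕊^{d−1} with x_d ≥ 0 an orthonormal basis (v₁(x),…,v_{d−1}(x)) of the tangent space T_x𝕊^{d−1} ⊆ ℝ^d, such that |vᵢ(x) − vᵢ(y)| ≤ C|x − y| for all i and all x, y in the upper hemisphere. -/
/-!
Let `e` be the unit vector `e_d`. For `x` on the sphere with `⟪e, x⟫ > -1`, the rotation of the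
plane spanned by `e` and `x` that takes `e` to `x` (and fixes its orthogonal complement) carries
the orthonormal frame `e_1, …, e_{d-1}` of `e^⊥` to an orthonormal frame of `x^⊥`. The only
denominator in the formula for this rotation is `1 + ⟪e, x⟫`, which is at least `1` on the upper
hemisphere, so the frame depends Lipschitz-continuously on `x` there.
-/

open scoped RealInnerProductSpace

lemma abs_div_sub_div_le_of_one_le {p q r s : ℝ} (hr : 1 ≤ r) (hs : 1 ≤ s) :
    |p / r - q / s| ≤ |p - q| * s + |q| * |s - r| := by
  have hrs : 1 ≤ r * s := by nlinarith
  have hsplit : p / r - q / s = ((p - q) * s + q * (s - r)) / (r * s) := by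
    field_simp
    ring
  calc |p / r - q / s| = |(p - q) * s + q * (s - r)| / (r * s) := by
        rw [hsplit, abs_div, abs_of_pos (by linarith : 0 < r * s)]
    _ ≤ |(p - q) * s + q * (s - r)| := div_le_self (abs_nonneg _) hrs
    _ ≤ |(p - q) * s| + |q * (s - r)| := abs_add_le _ _
    _ = |p - q| * s + |q| * |s - r| := by
        rw [abs_mul, abs_mul, abs_of_pos (by linarith : 0 < s)]

section PoleTransport

variable {E : Type*} [NormedAddCommGroup E] [InnerProductSpace ℝ E]

/-- For `u ⊥ e`, the image of `u` under the rotation of `span {e, x}` taking `e` to `x`. -/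
noncomputable def poleTransport (e x u : E) : E :=
  u - (⟪x, u⟫ / (1 + ⟪e, x⟫)) • (e + x)

lemma inner_poleTransport_self {e x : E} (hx : ‖x‖ = 1) (hex : 1 + ⟪e, x⟫ ≠ 0) (u : E) :
    ⟪poleTransport e x u, x⟫ = 0 := by
  have hxx : ⟪x, x⟫ = 1 := by rw [real_inner_self_eq_norm_sq, hx, one_pow]
  rw [poleTransport, inner_sub_left, inner_smul_left, inner_add_left, hxx, real_inner_comm u]
  simp only [RCLike.conj_to_real]
  field_simp
  ring

lemma inner_poleTransport_poleTransport {e x : E} (he : ‖e‖ = 1) (hx : ‖x‖ = 1)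
    (hex : 1 + ⟪e, x⟫ ≠ 0) {u u' : E} (hu : ⟪u, e⟫ = 0) (hu' : ⟪u', e⟫ = 0) :
    ⟪poleTransport e x u, poleTransport e x u'⟫ = ⟪u, u'⟫ := by
  have hnorm : ⟪e + x, e + x⟫ = 2 * (1 + ⟪e, x⟫) := by
    rw [real_inner_self_eq_norm_sq, norm_add_sq_real, he, hx]
    ring
  have hu_ex : ⟪u, e + x⟫ = ⟪x, u⟫ := by rw [inner_add_right, hu, zero_add, real_inner_comm]
  have hex_u' : ⟪e + x, u'⟫ = ⟪x, u'⟫ := by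
    rw [inner_add_left, real_inner_comm, hu', zero_add]
  rw [poleTransport, poleTransport, inner_sub_left, inner_sub_right, inner_sub_right,
    inner_smul_left, inner_smul_right, inner_smul_left, inner_smul_right, hnorm, hu_ex, hex_u']
  simp only [RCLike.conj_to_real]
  field_simp
  ring

lemma abs_poleTransport_coeff_le {e x : E} (hx : ‖x‖ = 1) (hex : 0 ≤ ⟪e, x⟫) (u : E) :
    |⟪x, u⟫ / (1 + ⟪e, x⟫)| ≤ ‖u‖ :=
  calc |⟪x, u⟫ / (1 + ⟪e, x⟫)| ≤ |⟪x, u⟫| := by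
        rw [abs_div, abs_of_pos (by linarith : 0 < 1 + ⟪e, x⟫)]
        exact div_le_self (abs_nonneg _) (by linarith)
    _ ≤ ‖u‖ := by simpa [hx] using abs_real_inner_le_norm x u

lemma abs_poleTransport_coeff_sub_le {e x y : E} (he : ‖e‖ = 1) (hy : ‖y‖ = 1)
    (hex : 0 ≤ ⟪e, x⟫) (hey : 0 ≤ ⟪e, y⟫) (u : E) :
    |⟪x, u⟫ / (1 + ⟪e, x⟫) - ⟪y, u⟫ / (1 + ⟪e, y⟫)| ≤ 3 * ‖u‖ * ‖x - y‖ := by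
  have hxy_u : |⟪x, u⟫ - ⟪y, u⟫| ≤ ‖x - y‖ * ‖u‖ := by
    rw [← inner_sub_left]
    exact abs_real_inner_le_norm _ _
  have hy_u : |⟪y, u⟫| ≤ ‖u‖ := by simpa [hy] using abs_real_inner_le_norm y u
  have hey_le : ⟪e, y⟫ ≤ 1 := by
    simpa [he, hy] using real_inner_le_norm e y
  have he_xy : |1 + ⟪e, y⟫ - (1 + ⟪e, x⟫)| ≤ ‖x - y‖ := by
    rw [add_sub_add_left_eq_sub, ← inner_sub_right, norm_sub_rev x y]
    simpa [he] using abs_real_inner_le_norm e (y - x)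
  calc _ ≤ |⟪x, u⟫ - ⟪y, u⟫| * (1 + ⟪e, y⟫) + |⟪y, u⟫| * |1 + ⟪e, y⟫ - (1 + ⟪e, x⟫)| :=
        abs_div_sub_div_le_of_one_le (by linarith) (by linarith)
    _ ≤ ‖x - y‖ * ‖u‖ * 2 + ‖u‖ * ‖x - y‖ := by gcongr; linarith
    _ = 3 * ‖u‖ * ‖x - y‖ := by ring

lemma norm_poleTransport_sub_le {e x y : E} (he : ‖e‖ = 1) (hx : ‖x‖ = 1) (hy : ‖y‖ = 1)
    (hex : 0 ≤ ⟪e, x⟫) (hey : 0 ≤ ⟪e, y⟫) (u : E) :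
    ‖poleTransport e x u - poleTransport e y u‖ ≤ 7 * ‖u‖ * ‖x - y‖ := by
  set a := ⟪x, u⟫ / (1 + ⟪e, x⟫)
  set b := ⟪y, u⟫ / (1 + ⟪e, y⟫)
  have hdiff : poleTransport e x u - poleTransport e y u = (b - a) • (e + y) + a • (y - x) := by
    simp only [poleTransport, a, b]
    module
  have hey_norm : ‖e + y‖ ≤ 2 := (norm_add_le e y).trans (by rw [he, hy]; norm_num)
  have hab : |b - a| ≤ 3 * ‖u‖ * ‖x - y‖ := by
    rw [abs_sub_comm]
    exact abs_poleTransport_coeff_sub_le he hy hex hey u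
  have ha : |a| ≤ ‖u‖ := abs_poleTransport_coeff_le hx hex u
  calc ‖poleTransport e x u - poleTransport e y u‖
      ≤ |b - a| * ‖e + y‖ + |a| * ‖y - x‖ := by
        rw [hdiff, ← Real.norm_eq_abs, ← Real.norm_eq_abs, ← norm_smul, ← norm_smul]
        exact norm_add_le _ _
    _ ≤ 3 * ‖u‖ * ‖x - y‖ * 2 + ‖u‖ * ‖x - y‖ := by
        rw [norm_sub_rev y x]
        gcongr
    _ = 7 * ‖u‖ * ‖x - y‖ := by ring

end PoleTransport

/-- There is a Lipschitz orthonormal `(d-1)`-frame on the closed upper hemisphere of the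
unit sphere in `ℝ^d`: each `v x i` is tangent to the sphere at `x`, the `v x i` are
orthonormal, and `x ↦ v x i` is Lipschitz on the upper hemisphere. -/
theorem exists_lipschitz_frame_upper_hemisphere (d : ℕ) (hd : 2 ≤ d) :
    ∃ C > (0 : ℝ), ∃ v : EuclideanSpace ℝ (Fin d) → Fin (d - 1) → EuclideanSpace ℝ (Fin d),
      (∀ x : EuclideanSpace ℝ (Fin d), ‖x‖ = 1 → 0 ≤ x ⟨d - 1, by omega⟩ →
        (∀ i, ⟪v x i, x⟫ = (0 : ℝ)) ∧
        (∀ i j, ⟪v x i, v x j⟫ = (if i = j then (1 : ℝ) else 0))) ∧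
      (∀ x y : EuclideanSpace ℝ (Fin d), ‖x‖ = 1 → 0 ≤ x ⟨d - 1, by omega⟩ →
        ‖y‖ = 1 → 0 ≤ y ⟨d - 1, by omega⟩ →
        ∀ i, ‖v x i - v y i‖ ≤ C * ‖x - y‖) := by
  set pole : Fin d := ⟨d - 1, by omega⟩
  set e : EuclideanSpace ℝ (Fin d) := EuclideanSpace.single pole 1
  set u : Fin (d - 1) → EuclideanSpace ℝ (Fin d) :=
    fun i ↦ EuclideanSpace.single (Fin.castLE (Nat.sub_le d 1) i) 1
  have he : ‖e‖ = 1 := by simp [e]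
  have he_inner (x : EuclideanSpace ℝ (Fin d)) : ⟪e, x⟫ = x pole := by
    simp [e, EuclideanSpace.inner_single_left]
  have hu : Orthonormal ℝ u :=
    EuclideanSpace.orthonormal_single.comp _ (Fin.castLE_injective _)
  have hu_pole (i : Fin (d - 1)) : ⟪u i, e⟫ = 0 := by
    refine (orthonormal_iff_ite.mp EuclideanSpace.orthonormal_single _ _).trans (if_neg ?_)
    intro h
    have := congrArg Fin.val h
    simp only [Fin.val_castLE, pole] at this
    omega
  refine ⟨7, by norm_num, fun x i ↦ poleTransport e x (u i), fun x hx hx_pole ↦ ⟨?_, ?_⟩, ?_⟩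
  · intro i
    exact inner_poleTransport_self hx (by rw [he_inner]; positivity) _
  · intro i j
    rw [inner_poleTransport_poleTransport he hx (by rw [he_inner]; positivity) (hu_pole i)
      (hu_pole j)]
    exact orthonormal_iff_ite.mp hu i j
  · intro x y hx hx_pole hy hy_pole i
    simpa [hu.1 i] using norm_poleTransport_sub_le he hx hy (by rwa [he_inner])
      (by rwa [he_inner]) (u i)
end

section
/- Let a_n be a sequence of nonnegative reals and suppose that for all m, n ∈ ℕ with n = km + r (0 ≤ r < m), a_n/n^{d−1} ≤ ((k+1)/k)^{d−1}·(a_m/m^{d−1}) + ((k+1)/k)^{d−1}·C/m + C·m/n for a fixed constant C > 0 and d ≥ 2. Then lim_{n→∞} a_n/n^{d−1} exists and is finite, equal to liminf_m a_m/m^{d−1}. -/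
/-!
Put `b n = a n / n ^ (d - 1)`. Fixing `m` and dividing `n = k m + r` with `k = n / m`, the
hypothesis bounds `b n` by a quantity tending to `b m + C / m` as `n → ∞`, so
`limsup b ≤ b m + C / m` for every `m ≥ 1` (and `b` is bounded). Letting `m → ∞` gives
`limsup b ≤ liminf b`.
-/

open Filter Topology

section LimsupLiminf

variable {ι : Type*} {f : Filter ι} [f.NeBot] {b : ι → ℝ}

theorem limsup_le_of_eventually_le_of_tendsto {g : ι → ℝ} {L : ℝ}
    (hb : IsBoundedUnder (· ≥ ·) f b) (hbg : b ≤ᶠ[f] g) (hg : Tendsto g f (𝓝 L)) :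
    limsup b f ≤ L :=
  (limsup_le_limsup hbg hb.isCoboundedUnder_le hg.isBoundedUnder_le).trans_eq hg.limsup_eq

theorem limsup_le_liminf_of_limsup_le_add {e : ι → ℝ}
    (hb_le : IsBoundedUnder (· ≤ ·) f b) (hb_ge : IsBoundedUnder (· ≥ ·) f b)
    (he : Tendsto e f (𝓝 0)) (h : ∀ᶠ m in f, limsup b f ≤ b m + e m) :
    limsup b f ≤ liminf b f :=
  calc limsup b f ≤ liminf (e + b) f :=
        le_liminf_of_le (isBoundedUnder_le_add he.isBoundedUnder_le hb_le).isCoboundedUnder_ge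
          (h.mono fun m hm => hm.trans_eq (add_comm _ _))
    _ ≤ limsup e f + liminf b f :=
        liminf_add_le he.isBoundedUnder_ge he.isBoundedUnder_le hb_ge hb_le.isCoboundedUnder_ge
    _ = liminf b f := by rw [he.limsup_eq, zero_add]

theorem tendsto_liminf_of_eventually_le_tendsto_add {e : ι → ℝ}
    (hb : IsBoundedUnder (· ≥ ·) f b) (he : Tendsto e f (𝓝 0))
    (h : ∀ᶠ m in f, ∃ g : ι → ℝ, b ≤ᶠ[f] g ∧ Tendsto g f (𝓝 (b m + e m))) :
    Tendsto b f (𝓝 (liminf b f)) := by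
  obtain ⟨m, g, hbg, hg⟩ := h.exists
  have hb_le : IsBoundedUnder (· ≤ ·) f b := hg.isBoundedUnder_le.mono_le hbg
  have hlimsup : ∀ᶠ m in f, limsup b f ≤ b m + e m :=
    h.mono fun m ⟨g, hbg, hg⟩ => limsup_le_of_eventually_le_of_tendsto hb hbg hg
  have hlim : limsup b f = liminf b f :=
    le_antisymm (limsup_le_liminf_of_limsup_le_add hb_le hb he hlimsup) (liminf_le_limsup hb_le hb)
  exact tendsto_of_liminf_eq_limsup rfl hlim hb_le hb

end LimsupLiminf

theorem tendsto_add_one_div_self_pow (p : ℕ) :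
    Tendsto (fun k : ℕ => (((k : ℝ) + 1) / k) ^ p) atTop (𝓝 1) := by
  have h : Tendsto (fun k : ℕ => 1 + 1 / (k : ℝ)) atTop (𝓝 1) := by
    simpa using (tendsto_const_div_atTop_nhds_zero_nat (1 : ℝ)).const_add 1
  have h' : Tendsto (fun k : ℕ => ((k : ℝ) + 1) / k) atTop (𝓝 1) := by
    refine h.congr' ?_
    filter_upwards [eventually_gt_atTop 0] with k hk
    field_simp
  simpa using h'.pow p

theorem exists_eventually_le_tendsto_of_approx_subadditive {b : ℕ → ℝ} {p : ℕ} {C : ℝ}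
    (hsub : ∀ m n k r : ℕ, 0 < m → 0 < k → n = k * m + r → r < m →
      b n ≤ (((k : ℝ) + 1) / (k : ℝ)) ^ p * b m
        + (((k : ℝ) + 1) / (k : ℝ)) ^ p * C / (m : ℝ) + C * (m : ℝ) / (n : ℝ))
    {m : ℕ} (hm : 0 < m) :
    ∃ g : ℕ → ℝ, b ≤ᶠ[atTop] g ∧ Tendsto g atTop (𝓝 (b m + C / m)) := by
  set q : ℕ → ℝ := fun n => ((((n / m : ℕ) : ℝ) + 1) / ((n / m : ℕ) : ℝ)) ^ p
  refine ⟨fun n => q n * b m + q n * C / m + C * m / n, ?_, ?_⟩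
  · filter_upwards [eventually_ge_atTop m] with n hn
    exact hsub m n (n / m) (n % m) hm (Nat.div_pos hn hm) (Nat.div_add_mod' n m).symm
      (Nat.mod_lt n hm)
  · have hq : Tendsto q atTop (𝓝 1) :=
      (tendsto_add_one_div_self_pow p).comp (Nat.tendsto_div_const_atTop hm.ne')
    simpa using ((hq.mul_const (b m)).add ((hq.mul_const C).div_const (m : ℝ))).add
      (tendsto_const_div_atTop_nhds_zero_nat (C * m))

theorem approx_subadditive_limit_general (d : ℕ) (C : ℝ)
    (a : ℕ → ℝ) (ha : ∀ n, 0 ≤ a n)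
    (hsub : ∀ m n k r : ℕ, 0 < m → 0 < k → n = k * m + r → r < m →
      a n / (n : ℝ) ^ (d - 1) ≤
        (((k : ℝ) + 1) / (k : ℝ)) ^ (d - 1) * (a m / (m : ℝ) ^ (d - 1))
          + (((k : ℝ) + 1) / (k : ℝ)) ^ (d - 1) * C / (m : ℝ)
          + C * (m : ℝ) / (n : ℝ)) :
    Tendsto (fun n => a n / (n : ℝ) ^ (d - 1)) atTop
      (nhds (liminf (fun m => a m / (m : ℝ) ^ (d - 1)) atTop)) := by
  have hb : IsBoundedUnder (· ≥ ·) atTop fun n => a n / (n : ℝ) ^ (d - 1) :=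
    isBoundedUnder_of_eventually_ge (a := 0) (.of_forall fun n => div_nonneg (ha n) (by positivity))
  refine tendsto_liminf_of_eventually_le_tendsto_add hb (tendsto_const_div_atTop_nhds_zero_nat C) ?_
  filter_upwards [eventually_gt_atTop 0] with m hm
  exact exists_eventually_le_tendsto_of_approx_subadditive hsub hm

/-- Approximate-subadditivity convergence: if a nonnegative sequence `a` satisfies, for
every decomposition `n = k·m + r` (`0 ≤ r < m`),
`a_n/n^{d-1} ≤ ((k+1)/k)^{d-1}·a_m/m^{d-1} + ((k+1)/k)^{d-1}·C/m + C·m/n`,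
then `a_n/n^{d-1}` converges to its liminf (which is finite). -/
theorem approx_subadditive_limit (d : ℕ) (hd : 2 ≤ d) (C : ℝ) (hC : 0 < C)
    (a : ℕ → ℝ) (ha : ∀ n, 0 ≤ a n)
    (hsub : ∀ m n k r : ℕ, 0 < m → 0 < k → n = k * m + r → r < m →
      a n / (n : ℝ) ^ (d - 1) ≤
        (((k : ℝ) + 1) / (k : ℝ)) ^ (d - 1) * (a m / (m : ℝ) ^ (d - 1))
          + (((k : ℝ) + 1) / (k : ℝ)) ^ (d - 1) * C / (m : ℝ)
          + C * (m : ℝ) / (n : ℝ)) :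
    Tendsto (fun n => a n / (n : ℝ) ^ (d - 1)) atTop
      (nhds (liminf (fun m => a m / (m : ℝ) ^ (d - 1)) atTop)) :=
  approx_subadditive_limit_general d C a ha hsub
end
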